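/- arXiv:1907.09472 — 4 statements merged into one kernel-verified Lean document; each statement's English description precedes it below -/
import Mathlib

section
/- (Main convergence theorem.) Let O be a finite set, M ⊆ M_O, pla : M_O → [0,∞) continuous, and suppose the true distribution μ ∈ M satisfies pla(μ) ≠ 0. Then for every ε > 0, the set of observation streams ω ∈ O^ℕ for which there exists K such that for all m ≥ K the conditional belief B(𝓑_ε(μ) | ω^m) holds in (M, pla) has μ̂-probability 1. Here ω^m denotes the initial segment (ω_1,…,ω_m), 𝓑_ε(μ) = {ν ∈ M | d(μ,ν) < ε} is the ε-ball around μ in the Euclidean metric, and B(P | ω^m) holds iff there exists ν ∈ M such that every ξ ∈ M with pla(ξ)·∏_{i=1}^m ξ(ω_i) ≥ pla(ν)·∏_{i=1}^m ν(ω_i) belongs to P. -/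
open MeasureTheory Filter

/-- The simplex `M_O` of probability mass functions on a finite set `O`,
identified with `{x ∈ [0,1]^O | ∑ x_i = 1}`. -/
def simplex (O : Type*) [Fintype O] : Set (O → ℝ) :=
  {x | (∀ o, 0 ≤ x o) ∧ ∑ o, x o = 1}

/-- `P` is the i.i.d. infinite product probability measure on `Ω = O^ℕ`
induced by `ν`, characterized by its values on cylinder events. -/
def IsIIDProduct {O : Type*} [Fintype O] [MeasurableSpace O]
    (ν : O → ℝ) (P : Measure (ℕ → O)) : Prop :=
  IsProbabilityMeasure P ∧
    ∀ (F : Finset ℕ) (s : ℕ → O),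
      P {ω | ∀ i ∈ F, ω i = s i} = ∏ i ∈ F, ENNReal.ofReal (ν (s i))

/-- Euclidean distance on the simplex `M_O ⊆ ℝ^O`. -/
noncomputable def euclDist {O : Type*} [Fintype O] (x y : O → ℝ) : ℝ :=
  Real.sqrt (∑ o, (x o - y o) ^ 2)

/-!
Almost surely the empirical frequencies `a_m` of the observations converge to `μ` (strong law of
large numbers) and every observation has positive `μ`-mass. Fix such a stream. The likelihood
`∏ ξ(ω_i)` is at most `exp (m ∑ₒ a_m(o) log (ξ_o + η))`; the shift `η > 0` keeps the logarithms
bounded uniformly in `ξ` (and away from the junk value `log 0 = 0`). From `log x ≤ 2 (√x - 1)` and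
`‖μ - ξ‖² ≤ 4 ∑ (√μ_o - √ξ_o)²` one gets, for `η` small, the gap
`∑ μ_o log (ξ_o + η) ≤ ∑ μ_o log μ_o - ε²/8` uniformly over `ξ` with `d(μ, ξ) ≥ ε`; by uniform
boundedness it survives, halved, with `a_m` in place of `μ` for large `m`. So every such `ξ` is
exponentially less likely than `μ`, which eventually beats the bounded factor `sup pla / pla μ`,
and `ν = μ` witnesses the conditional belief.
-/

open Real Topology ProbabilityTheory

lemma log_le_two_mul_sqrt_sub_one {x : ℝ} (hx : 0 < x) : log x ≤ 2 * (√x - 1) := by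
  have h := log_le_sub_one_of_pos (sqrt_pos.2 hx)
  rw [log_sqrt hx.le] at h
  linarith

lemma mul_log_add_sub_mul_log_le {x y η : ℝ} (hx₀ : 0 ≤ x) (hx₁ : x ≤ 1) (hy : 0 ≤ y)
    (hη : 0 < η) : x * log (y + η) - x * log x ≤ 2 * (√(x * y) + √η - x) := by
  rcases hx₀.eq_or_lt with rfl | hx
  · simp [sqrt_nonneg]
  have hyη : 0 < y + η := by linarith
  have hsplit : √(x * (y + η)) ≤ √(x * y) + √η := by
    rw [sqrt_le_iff]
    refine ⟨by positivity, ?_⟩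
    nlinarith [sq_sqrt (mul_nonneg hx.le hy), sq_sqrt hη.le, sqrt_nonneg (x * y), sqrt_nonneg η]
  have hscale : x * √((y + η) / x) = √(x * (y + η)) := by
    rw [← sqrt_sq hx.le, ← sqrt_mul (sq_nonneg x), sqrt_sq hx.le]
    congr 1
    field_simp
  calc x * log (y + η) - x * log x = x * log ((y + η) / x) := by
        rw [log_div hyη.ne' hx.ne']; ring
    _ ≤ x * (2 * (√((y + η) / x) - 1)) :=
        mul_le_mul_of_nonneg_left (log_le_two_mul_sqrt_sub_one (div_pos hyη hx)) hx.le
    _ = 2 * (√(x * (y + η)) - x) := by rw [← hscale]; ring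
    _ ≤ 2 * (√(x * y) + √η - x) := by linarith

lemma sq_sub_le_four_mul_sq_sqrt_sub {x y : ℝ} (hx₀ : 0 ≤ x) (hx₁ : x ≤ 1) (hy₀ : 0 ≤ y)
    (hy₁ : y ≤ 1) : (x - y) ^ 2 ≤ 4 * (√x - √y) ^ 2 := by
  have hfactor : x - y = (√x - √y) * (√x + √y) := by
    nlinarith [sq_sqrt hx₀, sq_sqrt hy₀]
  have hsum : (√x + √y) ^ 2 ≤ 4 := by
    nlinarith [sqrt_le_one.2 hx₁, sqrt_le_one.2 hy₁, sqrt_nonneg x, sqrt_nonneg y]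
  rw [hfactor, mul_pow, mul_comm 4]
  exact mul_le_mul_of_nonneg_left hsum (sq_nonneg _)

section Simplex

variable {O : Type*} [Fintype O]

lemma euclDist_sq (x y : O → ℝ) : euclDist x y ^ 2 = ∑ o, (x o - y o) ^ 2 :=
  sq_sqrt (Finset.sum_nonneg fun _ _ => sq_nonneg _)

lemma sum_sqrt_sub_sq_eq {μ ξ : O → ℝ} (hμ : μ ∈ simplex O) (hξ : ξ ∈ simplex O) :
    ∑ o, (√(μ o) - √(ξ o)) ^ 2 = 2 - 2 * ∑ o, √(μ o * ξ o) := by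
  have hterm : ∀ o, (√(μ o) - √(ξ o)) ^ 2 = μ o + ξ o - 2 * √(μ o * ξ o) := fun o => by
    rw [sqrt_mul (hμ.1 o)]
    nlinarith [sq_sqrt (hμ.1 o), sq_sqrt (hξ.1 o)]
  simp only [hterm, Finset.sum_sub_distrib, Finset.sum_add_distrib, ← Finset.mul_sum, hμ.2, hξ.2]
  ring

lemma euclDist_sq_le_four_mul_sum_sqrt_sub_sq {μ ξ : O → ℝ} (hμ : μ ∈ simplex O)
    (hξ : ξ ∈ simplex O) : euclDist μ ξ ^ 2 ≤ 4 * ∑ o, (√(μ o) - √(ξ o)) ^ 2 := by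
  rw [euclDist_sq, Finset.mul_sum]
  refine Finset.sum_le_sum fun o _ => ?_
  have hμo := mem_Icc_of_mem_stdSimplex hμ o
  have hξo := mem_Icc_of_mem_stdSimplex hξ o
  exact sq_sub_le_four_mul_sq_sqrt_sub hμo.1 hμo.2 hξo.1 hξo.2

theorem sum_mul_log_add_sub_sum_mul_log_le {μ ξ : O → ℝ} (hμ : μ ∈ simplex O)
    (hξ : ξ ∈ simplex O) {η : ℝ} (hη : 0 < η) :
    ∑ o, μ o * log (ξ o + η) - ∑ o, μ o * log (μ o) ≤
      2 * Fintype.card O * √η - euclDist μ ξ ^ 2 / 4 := by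
  calc ∑ o, μ o * log (ξ o + η) - ∑ o, μ o * log (μ o)
      ≤ ∑ o, 2 * (√(μ o * ξ o) + √η - μ o) := by
        rw [← Finset.sum_sub_distrib]
        refine Finset.sum_le_sum fun o _ => ?_
        have hμo := mem_Icc_of_mem_stdSimplex hμ o
        exact mul_log_add_sub_mul_log_le hμo.1 hμo.2 (hξ.1 o) hη
    _ = 2 * Fintype.card O * √η - ∑ o, (√(μ o) - √(ξ o)) ^ 2 := by
        rw [sum_sqrt_sub_sq_eq hμ hξ]
        simp only [mul_add, mul_sub, Finset.sum_sub_distrib, Finset.sum_add_distrib,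
          ← Finset.mul_sum, hμ.2, Finset.sum_const, Finset.card_univ, nsmul_eq_mul]
        ring
    _ ≤ 2 * Fintype.card O * √η - euclDist μ ξ ^ 2 / 4 := by
        linarith [euclDist_sq_le_four_mul_sum_sqrt_sub_sq hμ hξ]

lemma sum_mul_le_sum_mul_add_sum_abs_sub_mul {a b g : O → ℝ} {L : ℝ} (hg : ∀ o, |g o| ≤ L) :
    ∑ o, a o * g o ≤ ∑ o, b o * g o + (∑ o, |a o - b o|) * L := by
  rw [Finset.sum_mul, ← sub_le_iff_le_add', ← Finset.sum_sub_distrib]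
  refine Finset.sum_le_sum fun o _ => ?_
  calc a o * g o - b o * g o ≤ |a o - b o| * |g o| := by
        rw [← sub_mul, ← abs_mul]; exact le_abs_self _
    _ ≤ |a o - b o| * L := mul_le_mul_of_nonneg_left (hg o) (abs_nonneg _)

lemma eventually_forall_sum_mul_lt_of_tendsto {X : Type*} {a : ℕ → O → ℝ} {μ : O → ℝ}
    (ha : Tendsto a atTop (𝓝 μ)) {s : Set X} {g : X → O → ℝ} {f : O → ℝ} {γ L : ℝ}
    (hγ : 0 < γ) (hgap : ∀ x ∈ s, ∑ o, μ o * g x o ≤ ∑ o, μ o * f o - γ)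
    (hg : ∀ x ∈ s, ∀ o, |g x o| ≤ L) :
    ∀ᶠ m in atTop, ∀ x ∈ s, ∑ o, a m o * g x o < ∑ o, a m o * f o - γ / 2 := by
  have hcoord : ∀ o, Tendsto (fun m => a m o) atTop (𝓝 (μ o)) := tendsto_pi_nhds.1 ha
  have hf : Tendsto (fun m => ∑ o, a m o * f o) atTop (𝓝 (∑ o, μ o * f o)) :=
    tendsto_finsetSum _ fun o _ => (hcoord o).mul_const _
  have hdev : Tendsto (fun m => (∑ o, |a m o - μ o|) * L) atTop (𝓝 0) := by
    have := (tendsto_finsetSum Finset.univ fun o _ =>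
      ((hcoord o).sub_const (μ o)).abs).mul_const L
    simpa using this
  filter_upwards [hf.eventually (lt_mem_nhds (sub_lt_self _ (by positivity : 0 < γ / 4))),
    hdev.eventually (gt_mem_nhds (by positivity : 0 < γ / 4))] with m hfm hdevm x hx
  linarith [sum_mul_le_sum_mul_add_sum_abs_sub_mul (a := a m) (b := μ) (hg x hx), hgap x hx]

lemma abs_log_add_le {y η : ℝ} (hy₀ : 0 ≤ y) (hy₁ : y ≤ 1) (hη : 0 < η) :
    |log (y + η)| ≤ max |log η| |log (1 + η)| :=
  abs_le_max_abs_abs (log_le_log hη (by linarith)) (log_le_log (by linarith) (by linarith))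

lemma exists_forall_sum_mul_log_add_le {μ : O → ℝ} (hμ : μ ∈ simplex O) {ε : ℝ} (hε : 0 < ε) :
    ∃ η > 0, ∀ ξ ∈ simplex O, ε ≤ euclDist μ ξ →
      ∑ o, μ o * log (ξ o + η) ≤ ∑ o, μ o * log (μ o) - ε ^ 2 / 8 := by
  set n : ℝ := (Fintype.card O : ℝ)
  have hn : 0 < n + 1 := by positivity
  set t := ε ^ 2 / (16 * (n + 1))
  have ht : 0 < t := by positivity
  have hnt : 2 * n * t ≤ ε ^ 2 / 8 := by
    calc 2 * n * t ≤ 2 * (n + 1) * t := by gcongr; linarith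
      _ = ε ^ 2 / 8 := by simp only [t]; field_simp; ring
  refine ⟨t ^ 2, by positivity, fun ξ hξ hd => ?_⟩
  have hd2 : ε ^ 2 ≤ euclDist μ ξ ^ 2 := pow_le_pow_left₀ hε.le hd 2
  have := sum_mul_log_add_sub_sum_mul_log_le hμ hξ (pow_pos ht 2)
  rw [sqrt_sq ht.le] at this
  linarith

noncomputable def empiricalFreq [DecidableEq O] (ω : ℕ → O) (m : ℕ) (o : O) : ℝ :=
  (∑ i ∈ Finset.range m, if ω i = o then 1 else 0) / m

section Empirical

variable [DecidableEq O] (ω : ℕ → O) (m : ℕ)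

lemma sum_range_eq_mul_sum_empiricalFreq (F : O → ℝ) :
    ∑ i ∈ Finset.range m, F (ω i) = m * ∑ o, empiricalFreq ω m o * F o := by
  rcases Nat.eq_zero_or_pos m with rfl | hm
  · simp
  have hfiber : ∀ i, F (ω i) = ∑ o, (if ω i = o then 1 else 0) * F o := fun i => by
    simp [ite_mul]
  simp only [empiricalFreq, hfiber, Finset.mul_sum]
  rw [Finset.sum_comm]
  refine Finset.sum_congr rfl fun o _ => ?_
  rw [← Finset.sum_mul]
  field_simp

lemma prod_range_eq_exp_mul_sum_empiricalFreq {f : O → ℝ} (hf : ∀ i, 0 < f (ω i)) :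
    ∏ i ∈ Finset.range m, f (ω i) = exp (m * ∑ o, empiricalFreq ω m o * log (f o)) := by
  rw [← sum_range_eq_mul_sum_empiricalFreq ω m (fun o => log (f o)), exp_sum]
  exact Finset.prod_congr rfl fun i _ => (exp_log (hf i)).symm

end Empirical

theorem eventually_forall_likelihood_lt [DecidableEq O] {pla : (O → ℝ) → ℝ}
    (hpla : ContinuousOn pla (simplex O)) {μ : O → ℝ} (hμ : μ ∈ simplex O) (hplaμ : 0 < pla μ)
    {ε : ℝ} (hε : 0 < ε) {ω : ℕ → O} (hfreq : Tendsto (empiricalFreq ω) atTop (𝓝 μ))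
    (hsupp : ∀ i, 0 < μ (ω i)) :
    ∀ᶠ m in atTop, ∀ ξ ∈ simplex O, ε ≤ euclDist μ ξ →
      pla ξ * ∏ i ∈ Finset.range m, ξ (ω i) < pla μ * ∏ i ∈ Finset.range m, μ (ω i) := by
  obtain ⟨C, hC⟩ := (isCompact_stdSimplex ℝ O).bddAbove_image hpla
  have hC₀ : 0 < C := hplaμ.trans_le (hC (Set.mem_image_of_mem pla hμ))
  obtain ⟨η, hη, hgap⟩ := exists_forall_sum_mul_log_add_le hμ hε
  set γ := ε ^ 2 / 8
  have hlik := eventually_forall_sum_mul_lt_of_tendsto hfreq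
    (s := {ξ | ξ ∈ simplex O ∧ ε ≤ euclDist μ ξ}) (g := fun ξ o => log (ξ o + η))
    (f := fun o => log (μ o)) (by positivity) (fun ξ hξ => hgap ξ hξ.1 hξ.2)
    fun ξ hξ o => abs_log_add_le (hξ.1.1 o) (mem_Icc_of_mem_stdSimplex hξ.1 o).2 hη
  have hdecay : ∀ᶠ m : ℕ in atTop, C * exp (-(m * (γ / 2))) < pla μ := by
    have := (tendsto_exp_neg_atTop_nhds_zero.comp
      (tendsto_natCast_atTop_atTop.atTop_mul_const (by positivity : 0 < γ / 2))).const_mul C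
    rw [mul_zero] at this
    exact this.eventually (gt_mem_nhds hplaμ)
  filter_upwards [hlik, hdecay] with m hm hdec ξ hξ hd
  have hξη : ∀ i, 0 < ξ (ω i) + η := fun i => by linarith [hξ.1 (ω i)]
  calc pla ξ * ∏ i ∈ Finset.range m, ξ (ω i)
      ≤ C * exp (m * ∑ o, empiricalFreq ω m o * log (ξ o + η)) := by
        refine mul_le_mul (hC (Set.mem_image_of_mem pla hξ)) ?_
          (Finset.prod_nonneg fun i _ => hξ.1 (ω i)) hC₀.le
        rw [← prod_range_eq_exp_mul_sum_empiricalFreq ω m (f := fun o => ξ o + η) hξη]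
        exact Finset.prod_le_prod (fun i _ => hξ.1 (ω i)) fun i _ => by linarith
    _ ≤ C * exp (m * (∑ o, empiricalFreq ω m o * log (μ o) - γ / 2)) := by
        gcongr
        exact (hm ξ ⟨hξ, hd⟩).le
    _ = C * exp (-(m * (γ / 2))) * ∏ i ∈ Finset.range m, μ (ω i) := by
        rw [prod_range_eq_exp_mul_sum_empiricalFreq ω m hsupp, mul_assoc, ← exp_add]
        ring_nf
    _ < pla μ * ∏ i ∈ Finset.range m, μ (ω i) :=
        mul_lt_mul_of_pos_right hdec (Finset.prod_pos fun i _ => hsupp i)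

end Simplex

namespace IsIIDProduct

variable {O : Type*} [Fintype O] [MeasurableSpace O] [DiscreteMeasurableSpace O] {μ : O → ℝ}
  {P : Measure (ℕ → O)}

lemma map_eval_singleton (hP : IsIIDProduct μ P) (i : ℕ) (o : O) :
    P.map (fun ω => ω i) {o} = ENNReal.ofReal (μ o) := by
  rw [Measure.map_apply (measurable_pi_apply i) (measurableSet_singleton o)]
  simpa [Set.preimage] using hP.2 {i} fun _ => o

lemma identDistrib_eval (hP : IsIIDProduct μ P) (i j : ℕ) :
    IdentDistrib (fun ω => ω i) (fun ω => ω j) P P where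
  aemeasurable_fst := (measurable_pi_apply i).aemeasurable
  aemeasurable_snd := (measurable_pi_apply j).aemeasurable
  map_eq := Measure.ext_of_singleton fun o => by
    rw [hP.map_eval_singleton, hP.map_eval_singleton]

lemma indepFun_eval (hP : IsIIDProduct μ P) {i j : ℕ} (hij : i ≠ j) :
    IndepFun (fun ω => ω i) (fun ω => ω j) P := by
  have := hP.1
  rw [indepFun_iff_map_prod_eq_prod_map_map (measurable_pi_apply i).aemeasurable
    (measurable_pi_apply j).aemeasurable]
  refine Measure.ext_of_singleton fun ⟨a, b⟩ => ?_
  rw [← Set.singleton_prod_singleton, Measure.prod_prod, hP.map_eval_singleton,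
    hP.map_eval_singleton, Measure.map_apply (by fun_prop) (MeasurableSet.of_discrete)]
  simpa [hij, hij.symm, Set.preimage, and_comm] using hP.2 {i, j} fun k => if k = i then a else b

lemma ae_tendsto_average (hP : IsIIDProduct μ P) (hμ : ∀ o, 0 ≤ μ o) (F : O → ℝ) :
    ∀ᵐ ω ∂P, Tendsto (fun m : ℕ => (∑ i ∈ Finset.range m, F (ω i)) / m) atTop
      (𝓝 (∑ o, μ o * F o)) := by
  have := hP.1
  have hF : Measurable F := .of_discrete
  have hmean : P[fun ω => F (ω 0)] = ∑ o, μ o * F o := by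
    rw [← integral_map (measurable_pi_apply 0).aemeasurable hF.aestronglyMeasurable,
      integral_fintype Integrable.of_finite]
    simp only [measureReal_def, hP.map_eval_singleton, ENNReal.toReal_ofReal (hμ _), smul_eq_mul]
  have h := strong_law_ae_real (fun i (ω : ℕ → O) => F (ω i))
    (Integrable.of_finite.comp_measurable (measurable_pi_apply 0))
    (fun i j hij => (hP.indepFun_eval hij).comp hF hF)
    (fun i => (hP.identDistrib_eval i 0).comp hF)
  rw [hmean] at h
  exact h

lemma ae_tendsto_empiricalFreq [DecidableEq O] (hP : IsIIDProduct μ P) (hμ : ∀ o, 0 ≤ μ o) :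
    ∀ᵐ ω ∂P, Tendsto (empiricalFreq ω) atTop (𝓝 μ) := by
  have hcoord : ∀ o, ∀ᵐ ω ∂P, Tendsto (fun m => empiricalFreq ω m o) atTop (𝓝 (μ o)) :=
    fun o => by
      simpa [empiricalFreq] using hP.ae_tendsto_average hμ fun a => if a = o then 1 else 0
  filter_upwards [ae_all_iff.2 hcoord] with ω hω using tendsto_pi_nhds.2 hω

lemma ae_pos_eval (hP : IsIIDProduct μ P) : ∀ᵐ ω ∂P, ∀ i, 0 < μ (ω i) := by
  refine ae_all_iff.2 fun i => ae_of_ae_map (f := fun ω : ℕ → O => ω i)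
    (p := fun o => 0 < μ o) (measurable_pi_apply i).aemeasurable ?_
  refine ae_iff_of_countable.2 fun o ho => ?_
  rw [hP.map_eval_singleton] at ho
  exact ENNReal.ofReal_pos.1 (pos_iff_ne_zero.2 ho)

end IsIIDProduct

/-- Main convergence theorem: if the true distribution `μ ∈ M ⊆ M_O` has nonzero
plausibility, then with `μ̂`-probability 1 there is a stage `K` after which, for all
`m ≥ K`, the conditional belief `B(𝓑_ε(μ) | ω^m)` holds in `(M, pla)`: there is
`ν ∈ M` such that every `ξ ∈ M` with `pla_{ω^m}(ξ) ≥ pla_{ω^m}(ν)` satisfies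
`d(μ, ξ) < ε`, where `pla_w(ξ) = pla(ξ)·∏_{i<m} ξ(w_i)`. -/
theorem belief_converges_to_true_distribution
    {O : Type} [Fintype O] [MeasurableSpace O] [DiscreteMeasurableSpace O]
    (M : Set (O → ℝ)) (hM : M ⊆ simplex O)
    (pla : (O → ℝ) → ℝ)
    (hpla_cont : ContinuousOn pla (simplex O))
    (hpla_nonneg : ∀ ν ∈ simplex O, 0 ≤ pla ν)
    (μ : O → ℝ) (hμM : μ ∈ M) (hpla : pla μ ≠ 0)
    (P : Measure (ℕ → O)) (hP : IsIIDProduct μ P)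
    (ε : ℝ) (hε : 0 < ε) :
    P {ω | ∃ K, ∀ m ≥ K, ∃ ν ∈ M, ∀ ξ ∈ M,
        pla ν * ∏ i ∈ Finset.range m, ν (ω i) ≤
          pla ξ * ∏ i ∈ Finset.range m, ξ (ω i) →
        euclDist μ ξ < ε} = 1 := by
  classical
  have := hP.1
  have hμ : μ ∈ simplex O := hM hμM
  have hplaμ : 0 < pla μ := (hpla_nonneg μ hμ).lt_of_ne' hpla
  rw [← measure_univ (μ := P)]
  refine measure_congr (ae_eq_univ.2 ?_)
  filter_upwards [hP.ae_tendsto_empiricalFreq hμ.1, hP.ae_pos_eval] with ω hfreq hsupp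
  obtain ⟨K, hK⟩ := eventually_atTop.1
    (eventually_forall_likelihood_lt hpla_cont hμ hplaμ hε hfreq hsupp)
  exact ⟨K, fun m hm => ⟨μ, hμM, fun ξ hξ hle =>
    not_le.1 fun hd => (hK m hm ξ (hM hξ) hd).not_ge hle⟩⟩
end

section
/- Let O be a finite set, M ⊆ M_O a finite set of distributions, pla : M_O → [0,∞) continuous, and suppose the true distribution μ ∈ M satisfies pla(μ) ≠ 0. Then with μ̂-probability 1, the agent's belief settles on the correct distribution after finitely many observations: the set of ω ∈ O^ℕ for which there exists K such that for all m ≥ K the conditional belief B({μ} | ω^m) holds in (M, pla) has μ̂-probability 1. -/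
open MeasureTheory Filter

lemma sqrt_prod' {ι : Type*} (s : Finset ι) (f : ι → ℝ) (h : ∀ i ∈ s, 0 ≤ f i) :
    Real.sqrt (∏ i ∈ s, f i) = ∏ i ∈ s, Real.sqrt (f i) := by
  classical
  induction s using Finset.cons_induction with
  | empty => simp
  | cons a s ha ih =>
    rw [Finset.prod_cons, Finset.prod_cons,
      Real.sqrt_mul (h a (Finset.mem_cons_self a s)),
      ih (fun i hi => h i (Finset.mem_cons_of_mem hi))]

lemma sqrt_mul_le_avg {a b : ℝ} (ha : 0 ≤ a) (hb : 0 ≤ b) :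
    Real.sqrt (a * b) ≤ (a + b) / 2 := by
  have h1 : a * b ≤ ((a + b) / 2) ^ 2 := by nlinarith [sq_nonneg (a - b)]
  calc Real.sqrt (a * b) ≤ Real.sqrt (((a + b) / 2) ^ 2) := Real.sqrt_le_sqrt h1
    _ = (a + b) / 2 := Real.sqrt_sq (by positivity)

lemma sqrt_mul_lt_avg {a b : ℝ} (ha : 0 ≤ a) (hb : 0 ≤ b) (hab : a ≠ b) :
    Real.sqrt (a * b) < (a + b) / 2 := by
  have hne : a - b ≠ 0 := sub_ne_zero.mpr hab
  have h2 : 0 < (a - b) ^ 2 := lt_of_le_of_ne (sq_nonneg _) (Ne.symm (pow_ne_zero 2 hne))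
  have h1 : a * b < ((a + b) / 2) ^ 2 := by nlinarith
  calc Real.sqrt (a * b) < Real.sqrt (((a + b) / 2) ^ 2) :=
        Real.sqrt_lt_sqrt (by positivity) h1
    _ = (a + b) / 2 := Real.sqrt_sq (by positivity)

lemma bhattacharyya_lt_one {O : Type} [Fintype O] {ξ μ : O → ℝ}
    (hξ : ξ ∈ simplex O) (hμ : μ ∈ simplex O) (hne : ξ ≠ μ) :
    ∑ o, Real.sqrt (ξ o * μ o) < 1 := by
  obtain ⟨o₀, ho₀⟩ : ∃ o, ξ o ≠ μ o := by
    by_contra h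
    push_neg at h
    exact hne (funext h)
  have hlt : ∑ o, Real.sqrt (ξ o * μ o) < ∑ o, (ξ o + μ o) / 2 := by
    refine Finset.sum_lt_sum (fun o _ => sqrt_mul_le_avg (hξ.1 o) (hμ.1 o))
      ⟨o₀, Finset.mem_univ o₀, sqrt_mul_lt_avg (hξ.1 o₀) (hμ.1 o₀) ho₀⟩
  have : ∑ o, (ξ o + μ o) / 2 = 1 := by
    rw [show (fun o => (ξ o + μ o) / 2) = fun o => ξ o / 2 + μ o / 2 by funext o; ring]
    rw [Finset.sum_add_distrib, ← Finset.sum_div, ← Finset.sum_div, hξ.2, hμ.2]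
    norm_num
  linarith

/-- If `M ⊆ M_O` is finite and the true distribution `μ ∈ M` has nonzero
plausibility, then with `μ̂`-probability 1 the agent's belief settles on the
correct distribution after finitely many observations: eventually the conditional
belief `B({μ} | ω^m)` holds in `(M, pla)`. -/
theorem belief_settles_on_true_distribution_finite
    {O : Type} [Fintype O] [MeasurableSpace O] [DiscreteMeasurableSpace O]
    (M : Set (O → ℝ)) (hM : M ⊆ simplex O) (hMfin : M.Finite)
    (pla : (O → ℝ) → ℝ)
    (hpla_cont : ContinuousOn pla (simplex O))
    (hpla_nonneg : ∀ ν ∈ simplex O, 0 ≤ pla ν)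
    (μ : O → ℝ) (hμM : μ ∈ M) (hpla : pla μ ≠ 0)
    (P : Measure (ℕ → O)) (hP : IsIIDProduct μ P) :
    P {ω | ∃ K, ∀ m ≥ K, ∃ ν ∈ M, ∀ ξ ∈ M,
        pla ν * ∏ i ∈ Finset.range m, ν (ω i) ≤
          pla ξ * ∏ i ∈ Finset.range m, ξ (ω i) →
        ξ = μ} = 1 := by
  classical
  have hμs : μ ∈ simplex O := hM hμM
  have hcμ : 0 < pla μ := lt_of_le_of_ne (hpla_nonneg μ hμs) (Ne.symm hpla)
  have hO : Nonempty O := by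
    by_contra h
    rw [not_nonempty_iff] at h
    have := hμs.2
    simp at this
  inhabit O
  -- the bad event for a competitor ξ at time m
  set E : (O → ℝ) → ℕ → Set (ℕ → O) := fun ξ m =>
    {ω | pla μ * ∏ i ∈ Finset.range m, μ (ω i) ≤ pla ξ * ∏ i ∈ Finset.range m, ξ (ω i)}
    with hE
  -- key bound: for ξ ∈ M \ {μ}, P (E ξ m) ≤ ofReal C * (ofReal ρ)^m with ρ < 1
  have key : ∀ ξ ∈ M, ξ ≠ μ → P (limsup (E ξ) atTop) = 0 := by
    intro ξ hξM hξne
    have hξs : ξ ∈ simplex O := hM hξM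
    set ρ : ℝ := ∑ o, Real.sqrt (ξ o * μ o) with hρ
    have hρ0 : 0 ≤ ρ := Finset.sum_nonneg fun o _ => Real.sqrt_nonneg _
    have hρ1 : ρ < 1 := bhattacharyya_lt_one hξs hμs hξne
    set C : ℝ := Real.sqrt (pla ξ / pla μ) with hC
    -- bound P (E ξ m)
    have hbound : ∀ m, P (E ξ m) ≤ ENNReal.ofReal C * (ENNReal.ofReal ρ) ^ m := by
      intro m
      -- extension of a finite tuple to a stream
      set ext : (Fin m → O) → (ℕ → O) := fun s n => if h : n < m then s ⟨n, h⟩ else default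
        with hext
      have hextval : ∀ (s : Fin m → O) (i : Fin m), ext s (i : ℕ) = s i := by
        intro s i
        simp [hext, i.isLt]
      set Bad : Finset (Fin m → O) := Finset.univ.filter (fun s =>
        pla μ * ∏ i, μ (s i) ≤ pla ξ * ∏ i, ξ (s i)) with hBad
      -- covering of E ξ m by bad cylinders
      have hcover : E ξ m ⊆ ⋃ s ∈ Bad, {ω | ∀ i ∈ Finset.range m, ω i = ext s i} := by
        intro ω hω
        set s : Fin m → O := fun i => ω (i : ℕ) with hs
        have hprodμ : ∏ i ∈ Finset.range m, μ (ω i) = ∏ i, μ (s i) := by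
          rw [← Fin.prod_univ_eq_prod_range]
        have hprodξ : ∏ i ∈ Finset.range m, ξ (ω i) = ∏ i, ξ (s i) := by
          rw [← Fin.prod_univ_eq_prod_range]
        have hsBad : s ∈ Bad := by
          simp only [hBad, Finset.mem_filter, Finset.mem_univ, true_and]
          rw [← hprodμ, ← hprodξ]
          exact hω
        refine Set.mem_biUnion hsBad ?_
        intro i hi
        rw [Finset.mem_range] at hi
        simp [hext, hi, hs]
      have hcyl : ∀ s : Fin m → O,
          P {ω | ∀ i ∈ Finset.range m, ω i = ext s i}
            = ENNReal.ofReal (∏ i, μ (s i)) := by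
        intro s
        rw [hP.2 (Finset.range m) (ext s)]
        have heq : ∏ i ∈ Finset.range m, ENNReal.ofReal (μ (ext s i))
            = ∏ i : Fin m, ENNReal.ofReal (μ (s i)) := by
          rw [← Fin.prod_univ_eq_prod_range (fun i => ENNReal.ofReal (μ (ext s i))) m]
          exact Finset.prod_congr rfl fun i _ => by rw [hextval]
        rw [heq, ← ENNReal.ofReal_prod_of_nonneg (fun i _ => hμs.1 _)]
      -- real bound for bad tuples
      have hreal : ∀ s ∈ Bad, ∏ i, μ (s i) ≤ C * ∏ i, Real.sqrt (ξ (s i) * μ (s i)) := by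
        intro s hsB
        rw [hBad, Finset.mem_filter] at hsB
        have hbad := hsB.2
        set a : ℝ := ∏ i, μ (s i) with hadef
        set b : ℝ := ∏ i, ξ (s i) with hbdef
        have ha : 0 ≤ a := Finset.prod_nonneg fun i _ => hμs.1 _
        have hb : 0 ≤ b := Finset.prod_nonneg fun i _ => hξs.1 _
        have hq : a ≤ pla ξ / pla μ * b := by
          rw [div_mul_eq_mul_div, le_div_iff₀ hcμ]
          linarith
        have h2 : a * a ≤ pla ξ / pla μ * (b * a) := by
          calc a * a ≤ (pla ξ / pla μ * b) * a := mul_le_mul_of_nonneg_right hq ha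
            _ = pla ξ / pla μ * (b * a) := by ring
        have h3 : a = Real.sqrt (a * a) := (Real.sqrt_mul_self ha).symm
        have h4 : Real.sqrt (a * a) ≤ Real.sqrt (pla ξ / pla μ * (b * a)) :=
          Real.sqrt_le_sqrt h2
        have h5 : Real.sqrt (pla ξ / pla μ * (b * a)) = C * Real.sqrt (b * a) :=
          Real.sqrt_mul (div_nonneg (hpla_nonneg ξ hξs) hcμ.le) _
        have h6 : b * a = ∏ i, (ξ (s i) * μ (s i)) := by
          rw [hadef, hbdef, ← Finset.prod_mul_distrib]
        have h7 : Real.sqrt (b * a) = ∏ i, Real.sqrt (ξ (s i) * μ (s i)) := by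
          rw [h6, sqrt_prod' _ _ fun i _ => mul_nonneg (hξs.1 _) (hμs.1 _)]
        calc a = Real.sqrt (a * a) := h3
          _ ≤ Real.sqrt (pla ξ / pla μ * (b * a)) := h4
          _ = C * Real.sqrt (b * a) := h5
          _ = C * ∏ i, Real.sqrt (ξ (s i) * μ (s i)) := by rw [h7]
      -- sum over all tuples gives ρ^m
      have hsum : ∑ s : Fin m → O, ∏ i, Real.sqrt (ξ (s i) * μ (s i)) = ρ ^ m := by
        have h := (Finset.prod_univ_sum (fun _ : Fin m => (Finset.univ : Finset O))
          (fun _ o => Real.sqrt (ξ o * μ o))).symm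
        rw [Fintype.piFinset_univ] at h
        rw [hρ, h, Finset.prod_const, Finset.card_univ, Fintype.card_fin]
      calc P (E ξ m) ≤ P (⋃ s ∈ Bad, {ω | ∀ i ∈ Finset.range m, ω i = ext s i}) :=
            measure_mono hcover
        _ ≤ ∑ s ∈ Bad, P {ω | ∀ i ∈ Finset.range m, ω i = ext s i} :=
            measure_biUnion_finset_le _ _
        _ = ∑ s ∈ Bad, ENNReal.ofReal (∏ i, μ (s i)) := by
            exact Finset.sum_congr rfl fun s _ => hcyl s
        _ ≤ ∑ s ∈ Bad, ENNReal.ofReal (C * ∏ i, Real.sqrt (ξ (s i) * μ (s i))) := by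
            exact Finset.sum_le_sum fun s hs => ENNReal.ofReal_le_ofReal (hreal s hs)
        _ ≤ ∑ s : Fin m → O, ENNReal.ofReal (C * ∏ i, Real.sqrt (ξ (s i) * μ (s i))) := by
            exact Finset.sum_le_sum_of_subset (Finset.filter_subset _ _)
        _ = ENNReal.ofReal (∑ s : Fin m → O, C * ∏ i, Real.sqrt (ξ (s i) * μ (s i))) := by
            rw [ENNReal.ofReal_sum_of_nonneg]
            intro s _
            exact mul_nonneg (Real.sqrt_nonneg _)
              (Finset.prod_nonneg fun i _ => Real.sqrt_nonneg _)
        _ = ENNReal.ofReal (C * ρ ^ m) := by rw [← Finset.mul_sum, hsum]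
        _ ≤ ENNReal.ofReal C * (ENNReal.ofReal ρ) ^ m := by
            rw [ENNReal.ofReal_mul (Real.sqrt_nonneg _), ENNReal.ofReal_pow hρ0]
      -- summability and Borel–Cantelli
    have htsum : ∑' m, P (E ξ m) ≠ ⊤ := by
      have h1 : ∑' m, P (E ξ m) ≤ ∑' m : ℕ, ENNReal.ofReal C * (ENNReal.ofReal ρ) ^ m :=
        ENNReal.tsum_le_tsum hbound
      rw [ENNReal.tsum_mul_left, ENNReal.tsum_geometric] at h1
      have hρlt : ENNReal.ofReal ρ < 1 := by
        rw [← ENNReal.ofReal_one]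
        exact ENNReal.ofReal_lt_ofReal_iff_of_nonneg hρ0 |>.mpr hρ1
      have hfin : ENNReal.ofReal C * (1 - ENNReal.ofReal ρ)⁻¹ ≠ ⊤ := by
        apply ENNReal.mul_ne_top ENNReal.ofReal_ne_top
        rw [Ne, ENNReal.inv_eq_top, tsub_eq_zero_iff_le]
        exact not_le.mpr hρlt
      exact ne_top_of_le_ne_top hfin h1
    exact measure_limsup_atTop_eq_zero htsum
  -- combine over the finitely many competitors
  set T : Set (ℕ → O) := ⋃ ξ ∈ (M \ {μ} : Set (O → ℝ)), limsup (E ξ) atTop with hT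
  have hTnull : P T = 0 := by
    rw [hT]
    refine measure_biUnion_null_iff ((hMfin.subset Set.diff_subset).countable) |>.mpr ?_
    rintro ξ ⟨hξM, hξne⟩
    exact key ξ hξM hξne
  -- Tᶜ is contained in the goal set
  have hsub : Tᶜ ⊆ {ω | ∃ K, ∀ m ≥ K, ∃ ν ∈ M, ∀ ξ ∈ M,
      pla ν * ∏ i ∈ Finset.range m, ν (ω i) ≤
        pla ξ * ∏ i ∈ Finset.range m, ξ (ω i) → ξ = μ} := by
    intro ω hω
    simp only [hT, Set.compl_iUnion, Set.mem_iInter] at hω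
    have hev : ∀ᶠ m in atTop, ∀ ξ ∈ (M \ {μ} : Set (O → ℝ)), ω ∉ E ξ m := by
      rw [eventually_all_finite (hMfin.subset Set.diff_subset)]
      intro ξ hξ
      have h1 : ω ∉ limsup (E ξ) atTop := hω ξ hξ
      rw [Filter.mem_limsup_iff_frequently_mem, Filter.not_frequently] at h1
      exact h1
    rw [eventually_atTop] at hev
    obtain ⟨K, hK⟩ := hev
    refine ⟨K, fun m hm => ⟨μ, hμM, fun ξ hξM hle => ?_⟩⟩
    by_contra hne
    exact hK m hm ξ ⟨hξM, hne⟩ hle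
  -- conclude
  haveI := hP.1
  refine le_antisymm prob_le_one ?_
  calc (1 : ENNReal) = P Set.univ := measure_univ.symm
    _ = P (Tᶜ ∪ T) := by rw [Set.compl_union_self]
    _ ≤ P Tᶜ + P T := measure_union_le _ _
    _ = P Tᶜ := by rw [hTnull, add_zero]
    _ ≤ _ := measure_mono hsub
end

section
/- (Cautious monotonicity/cut, semantic AGM validity.) Let M be a set, pla : M → ℝ, and for S, P ⊆ M define the conditional belief B(P | S) to hold iff there exists μ ∈ S with {ν ∈ S | pla(ν) ≥ pla(μ)} ⊆ P. Then for all P, Q, R ⊆ M: if B(Q | P) holds, then B(R | P ∩ Q) holds if and only if B(R | P) holds. -/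
/-- Conditional belief: `B(P | S)` holds iff there exists `μ ∈ S` such that every
`ν ∈ S` at least as plausible as `μ` belongs to `P`. -/
def CBel {M : Type*} (pla : M → ℝ) (P S : Set M) : Prop :=
  ∃ μ ∈ S, {ν | ν ∈ S ∧ pla μ ≤ pla ν} ⊆ P

/-- Cautious monotonicity / cut: if `B(Q | P)` holds, then `B(R | P ∩ Q)` holds
if and only if `B(R | P)` holds. -/
theorem cautious_monotonicity_cut {M : Type*} (pla : M → ℝ) (P Q R : Set M)
    (hQ : CBel pla Q P) :
    CBel pla R (P ∩ Q) ↔ CBel pla R P := by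
  obtain ⟨μ₀, hμ₀P, hμ₀⟩ := hQ
  constructor
  · rintro ⟨μ, ⟨hμP, hμQ⟩, hμ⟩
    rcases le_total (pla μ₀) (pla μ) with h | h
    · exact ⟨μ, hμP, fun ν ⟨hνP, hνle⟩ =>
        hμ ⟨⟨hνP, hμ₀ ⟨hνP, h.trans hνle⟩⟩, hνle⟩⟩
    · exact ⟨μ₀, hμ₀P, fun ν ⟨hνP, hνle⟩ =>
        hμ ⟨⟨hνP, hμ₀ ⟨hνP, hνle⟩⟩, h.trans hνle⟩⟩
  · rintro ⟨μ, hμP, hμ⟩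
    rcases le_total (pla μ₀) (pla μ) with h | h
    · exact ⟨μ, ⟨hμP, hμ₀ ⟨hμP, h⟩⟩, fun ν ⟨⟨hνP, _⟩, hνle⟩ => hμ ⟨hνP, hνle⟩⟩
    · exact ⟨μ₀, ⟨hμ₀P, hμ₀ ⟨hμ₀P, le_refl _⟩⟩, fun ν ⟨⟨hνP, _⟩, hνle⟩ =>
        hμ ⟨hνP, h.trans hνle⟩⟩
end

section
/- (Rational monotonicity, semantic AGM validity.) Let M be a set, pla : M → ℝ, and for S, P ⊆ M define the conditional belief B(P | S) to hold iff there exists μ ∈ S with {ν ∈ S | pla(ν) ≥ pla(μ)} ⊆ P. Then for all P, Q, R ⊆ M: if B(M \ Q | P) does not hold, then B(R | P ∩ Q) holds if and only if B((M \ Q) ∪ R | P) holds. -/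
/-- Rational monotonicity: if `B(M \ Q | P)` does not hold, then `B(R | P ∩ Q)`
holds if and only if `B((M \ Q) ∪ R | P)` holds. -/
theorem rational_monotonicity {M : Type*} (pla : M → ℝ) (P Q R : Set M)
    (hQ : ¬ CBel pla Qᶜ P) :
    CBel pla R (P ∩ Q) ↔ CBel pla (Qᶜ ∪ R) P := by
  constructor
  · rintro ⟨μ, ⟨hμP, hμQ⟩, hμ⟩
    refine ⟨μ, hμP, ?_⟩
    rintro ν ⟨hνP, hle⟩
    by_cases hνQ : ν ∈ Q
    · exact Or.inr (hμ ⟨⟨hνP, hνQ⟩, hle⟩)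
    · exact Or.inl hνQ
  · rintro ⟨μ, hμP, hμ⟩
    have : ∃ ν, ν ∈ P ∧ pla μ ≤ pla ν ∧ ν ∈ Q := by
      by_contra h
      push_neg at h
      exact hQ ⟨μ, hμP, fun ν ⟨hνP, hle⟩ => h ν hνP hle⟩
    obtain ⟨ν, hνP, hle, hνQ⟩ := this
    refine ⟨ν, ⟨hνP, hνQ⟩, ?_⟩
    rintro ρ ⟨⟨hρP, hρQ⟩, hle'⟩
    rcases hμ ⟨hρP, le_trans hle hle'⟩ with h | h
    · exact absurd hρQ h
    · exact h
end
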